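/- For the Static Black-Peg AB Game with 3 pegs and c ≥ 5 colors: if a feasible strategy contains no (1,1,1)-question, then it contains in total at most six questions that are (1,1,≥2)-questions, (1,≥2,1)-questions, or (≥2,1,1)-questions. -/

import Mathlib

/-- The answer of a question `Q` to a secret `S`: the number of pegs where they agree. -/
def answer {p c : ℕ} (Q S : Fin p → Fin c) : ℕ :=
  (Finset.univ.filter fun i => Q i = S i).card

/-- A strategy (a list of pairwise distinct injective codes) is feasible if the list of
answers determines every injective secret uniquely. -/
def Feasible {p c : ℕ} (qs : List (Fin p → Fin c)) : Prop :=
  qs.Nodup ∧ (∀ Q ∈ qs, Function.Injective Q) ∧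
    ∀ S S' : Fin p → Fin c, Function.Injective S → Function.Injective S' →
      qs.map (fun Q => answer Q S) = qs.map (fun Q => answer Q S') → S = S'

/-- The number of questions of the strategy `qs` having color `q` on peg `i`. -/
def occ {p c : ℕ} (qs : List (Fin p → Fin c)) (i : Fin p) (q : Fin c) : ℕ :=
  qs.countP fun Q => decide (Q i = q)

/-!
Call a question whose colors on the pegs `a ≠ b` occur there in no other question an
`(a,b)`-question. If `Q`, `Q'` are two of them, the secret with `Q a`, `Q' b` on these pegs and
the one with `Q' a`, `Q b` (both with a fifth, fresh color on the third peg) get the same answers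
from every question, so feasibility forces `Q a = Q' b` or `Q' a = Q b`. Since these colors are
unique, every `(a,b)`-question is linked in this way to at most one other on each side: there are
at most three, and three of them use the same colors on peg `a` as on peg `b`. So each of the
three kinds of questions in the statement occurs at most three times. Rotating along the three
pegs the colors of one question of each kind gives another pair of secrets that feasibility
separates; with the closure property above this excludes the size patterns `(3, 3, ≥ 1)` and
`(3, ≥ 2, ≥ 2)`, i.e. every pattern of sum at least seven.
-/

open Finset Function Equiv

section General

variable {p c : ℕ}

lemma answer_eq_of_perm {P S S' : Fin p → Fin c} (σ : Perm (Fin p))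
    (h : ∀ t, P t = S t ↔ P (σ t) = S' (σ t)) : answer P S = answer P S' :=
  card_equiv σ (by simpa using h)

lemma eq_of_occ_eq_one {qs : List (Fin p → Fin c)} {i : Fin p} {P Q : Fin p → Fin c}
    (hP : P ∈ qs) (hQ : Q ∈ qs) (hQi : occ qs i (Q i) = 1) (h : P i = Q i) : P = Q := by
  rw [occ, List.countP_eq_length_filter, List.length_eq_one_iff] at hQi
  obtain ⟨R, hR⟩ := hQi
  have mem : ∀ X ∈ qs, X i = Q i → X = R := fun X hX hXi => by
    have : X ∈ qs.filter fun Y => decide (Y i = Q i) :=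
      List.mem_filter.2 ⟨hX, by simpa using hXi⟩
    simpa [hR] using this
  rw [mem P hP h, mem Q hQ rfl]

lemma apply_eq_iff_of_occ_eq_one {qs : List (Fin p → Fin c)} {i : Fin p} {P Q : Fin p → Fin c}
    (hP : P ∈ qs) (hQ : Q ∈ qs) (hQi : occ qs i (Q i) = 1) : P i = Q i ↔ P = Q :=
  ⟨eq_of_occ_eq_one hP hQ hQi, fun h => h ▸ rfl⟩

theorem Feasible.eq_of_perm {qs : List (Fin p → Fin c)} (hqs : Feasible qs)
    {S S' : Fin p → Fin c} (hS : Injective S) (hS' : Injective S') (σ : Perm (Fin p))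
    (h : ∀ P ∈ qs, ∀ t, P t = S t ↔ P (σ t) = S' (σ t)) : S = S' :=
  hqs.2.2 S S' hS hS' (List.map_congr_left fun P hP => answer_eq_of_perm σ (h P hP))

lemma card_filter_apply_eq_le_one {qs : List (Fin p → Fin c)} {b : Fin p}
    {s : Finset (Fin p → Fin c)} (hsq : ∀ R ∈ s, R ∈ qs) (hb : ∀ R ∈ s, occ qs b (R b) = 1)
    (x : Fin c) : #(s.filter fun R => R b = x) ≤ 1 :=
  card_le_one.2 fun R hR R' hR' => by
    rw [mem_filter] at hR hR'
    exact eq_of_occ_eq_one (hsq R hR.1) (hsq R' hR'.1) (hb R' hR'.1) (hR.2.trans hR'.2.symm)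

lemma exists_ne_of_five_le (hc : 5 ≤ c) (a b d e : Fin c) :
    ∃ x, x ≠ a ∧ x ≠ b ∧ x ≠ d ∧ x ≠ e := by
  obtain ⟨x, -, hx⟩ := exists_mem_notMem_of_card_lt_card (s := {a, b, d, e}) (t := univ)
    (card_le_four.trans_lt (by simp; omega))
  simp only [mem_insert, mem_singleton, not_or] at hx
  exact ⟨x, hx⟩

end General

lemma Fin.eq_of_ne_of_ne_three {i j k t : Fin 3} (hij : i ≠ j) (hki : k ≠ i) (hkj : k ≠ j)
    (hti : t ≠ i) (htj : t ≠ j) : t = k := by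
  omega

variable {c : ℕ}

def code3 (i j : Fin 3) (a b d : Fin c) : Fin 3 → Fin c :=
  fun t => if t = i then a else if t = j then b else d

section Code3

variable {i j t : Fin 3} {a b d : Fin c}

lemma code3_apply_left : code3 i j a b d i = a := if_pos rfl

lemma code3_apply_right (hij : i ≠ j) : code3 i j a b d j = b := by
  simp [code3, hij.symm]

lemma code3_apply_of_ne (hti : t ≠ i) (htj : t ≠ j) : code3 i j a b d t = d := by
  simp [code3, hti, htj]

lemma code3_injective (hij : i ≠ j) (hab : a ≠ b) (had : a ≠ d) (hbd : b ≠ d) :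
    Injective (code3 i j a b d) := by
  intro t t' h
  simp only [code3] at h
  split_ifs at h <;> subst_vars <;> omega

end Code3

variable {qs : List (Fin 3 → Fin c)}

theorem Feasible.apply_eq_or_apply_eq (hqs : Feasible qs) (hc : 5 ≤ c) {i j : Fin 3}
    (hij : i ≠ j) {Q Q' : Fin 3 → Fin c} (hQ : Q ∈ qs) (hQ' : Q' ∈ qs) (hne : Q ≠ Q')
    (hQi : occ qs i (Q i) = 1) (hQj : occ qs j (Q j) = 1)
    (hQ'i : occ qs i (Q' i) = 1) (hQ'j : occ qs j (Q' j) = 1) :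
    Q i = Q' j ∨ Q' i = Q j := by
  by_contra! h
  obtain ⟨x, hx⟩ := exists_ne_of_five_le hc (Q i) (Q' j) (Q' i) (Q j)
  -- swapping the pegs `i` and `j` turns each of the two secrets into the other
  have hS : code3 i j (Q i) (Q' j) x = code3 i j (Q' i) (Q j) x := by
    refine hqs.eq_of_perm (code3_injective hij h.1 hx.1.symm hx.2.1.symm)
      (code3_injective hij h.2 hx.2.2.1.symm hx.2.2.2.symm) (swap i j) fun P hP t => ?_
    by_cases hti : t = i
    · subst hti
      simp only [swap_apply_left, code3_apply_left, code3_apply_right hij]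
      rw [apply_eq_iff_of_occ_eq_one hP hQ hQi, apply_eq_iff_of_occ_eq_one hP hQ hQj]
    by_cases htj : t = j
    · subst htj
      simp only [swap_apply_right, code3_apply_left, code3_apply_right hij]
      rw [apply_eq_iff_of_occ_eq_one hP hQ' hQ'i, apply_eq_iff_of_occ_eq_one hP hQ' hQ'j]
    · rw [swap_apply_of_ne_of_ne hti htj, code3_apply_of_ne hti htj, code3_apply_of_ne hti htj]
  have hi := congrFun hS i
  simp only [code3_apply_left] at hi
  exact hne (eq_of_occ_eq_one hQ hQ' hQ'i hi)

theorem Feasible.triple_apply_eq (hqs : Feasible qs) {i j k : Fin 3}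
    (hij : i ≠ j) (hik : i ≠ k) (hjk : j ≠ k) {U V W : Fin 3 → Fin c}
    (hU : U ∈ qs) (hV : V ∈ qs) (hW : W ∈ qs) (hVW : V ≠ W)
    (hUj : occ qs j (U j) = 1) (hUk : occ qs k (U k) = 1)
    (hVi : occ qs i (V i) = 1) (hVk : occ qs k (V k) = 1)
    (hWi : occ qs i (W i) = 1) (hWj : occ qs j (W j) = 1) :
    W i = U j ∨ W i = V k ∨ U j = V k ∨ V i = W j ∨ V i = U k ∨ W j = U k := by
  by_contra! h
  obtain ⟨h1, h2, h3, h4, h5, h6⟩ := h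
  -- rotating the pegs `i → j → k → i` turns each of the two secrets into the other
  have hS : code3 i j (W i) (U j) (V k) = code3 i j (V i) (W j) (U k) := by
    refine hqs.eq_of_perm (code3_injective hij h1 h2 h3) (code3_injective hij h4 h5 h6)
      (swap i j * swap j k) fun P hP t => ?_
    rcases eq_or_ne t i with rfl | hti
    · simp only [Perm.mul_apply, swap_apply_of_ne_of_ne hij hik, swap_apply_left,
        code3_apply_left, code3_apply_right hij]
      rw [apply_eq_iff_of_occ_eq_one hP hW hWi, apply_eq_iff_of_occ_eq_one hP hW hWj]
    rcases eq_or_ne t j with rfl | htj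
    · simp only [Perm.mul_apply, swap_apply_left, swap_apply_of_ne_of_ne hik.symm hjk.symm,
        code3_apply_right hij, code3_apply_of_ne hik.symm hjk.symm]
      rw [apply_eq_iff_of_occ_eq_one hP hU hUj, apply_eq_iff_of_occ_eq_one hP hU hUk]
    · obtain rfl := Fin.eq_of_ne_of_ne_three hij hik.symm hjk.symm hti htj
      simp only [Perm.mul_apply, swap_apply_right, code3_apply_left, code3_apply_of_ne hti htj]
      rw [apply_eq_iff_of_occ_eq_one hP hV hVk, apply_eq_iff_of_occ_eq_one hP hV hVi]
  have hi := congrFun hS i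
  simp only [code3_apply_left] at hi
  exact hVW (eq_of_occ_eq_one hV hW hWi hi.symm)

section Links

variable {a b : Fin 3} {s : Finset (Fin 3 → Fin c)}

theorem Feasible.card_le_card_filter_add_two (hqs : Feasible qs) (hc : 5 ≤ c) (hab : a ≠ b)
    (hsq : ∀ R ∈ s, R ∈ qs) (ha : ∀ R ∈ s, occ qs a (R a) = 1)
    (hb : ∀ R ∈ s, occ qs b (R b) = 1) {Q : Fin 3 → Fin c} (hQ : Q ∈ s) :
    #s ≤ #(s.filter fun R => R b = Q a) + 2 := by
  have hsub : s.erase Q ⊆ s.filter (fun R => R b = Q a) ∪ s.filter (fun R => R a = Q b) := by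
    intro R hR
    obtain ⟨hRQ, hRs⟩ := mem_erase.1 hR
    rcases hqs.apply_eq_or_apply_eq hc hab (hsq Q hQ) (hsq R hRs) hRQ.symm (ha Q hQ) (hb Q hQ)
      (ha R hRs) (hb R hRs) with h | h
    · exact mem_union_left _ (mem_filter.2 ⟨hRs, h.symm⟩)
    · exact mem_union_right _ (mem_filter.2 ⟨hRs, h⟩)
  have := (card_le_card hsub).trans (card_union_le _ _)
  have := card_filter_apply_eq_le_one hsq ha (Q b)
  rw [card_erase_of_mem hQ] at *
  omega

theorem Feasible.card_le_three (hqs : Feasible qs) (hc : 5 ≤ c) (hab : a ≠ b)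
    (hsq : ∀ R ∈ s, R ∈ qs) (ha : ∀ R ∈ s, occ qs a (R a) = 1)
    (hb : ∀ R ∈ s, occ qs b (R b) = 1) : #s ≤ 3 := by
  obtain rfl | ⟨Q, hQ⟩ := s.eq_empty_or_nonempty
  · simp
  have := hqs.card_le_card_filter_add_two hc hab hsq ha hb hQ
  have := card_filter_apply_eq_le_one hsq hb (Q a)
  omega

theorem Feasible.mem_of_apply_eq (hqs : Feasible qs) (hc : 5 ≤ c) (hab : a ≠ b)
    (hsq : ∀ R ∈ s, R ∈ qs) (ha : ∀ R ∈ s, occ qs a (R a) = 1)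
    (hb : ∀ R ∈ s, occ qs b (R b) = 1) (h3 : #s = 3) {P Q : Fin 3 → Fin c} (hQ : Q ∈ s)
    (hP : P ∈ qs) (h : P b = Q a) : P ∈ s := by
  have := hqs.card_le_card_filter_add_two hc hab hsq ha hb hQ
  obtain ⟨R, hR⟩ := card_pos.1 (by omega : 0 < #(s.filter fun R => R b = Q a))
  rw [mem_filter] at hR
  rw [eq_of_occ_eq_one hP (hsq R hR.1) (hb R hR.1) (h.trans hR.2.symm)]
  exact hR.1

theorem Feasible.exists_apply_eq_of_two_le_card (hqs : Feasible qs) (hc : 5 ≤ c) (hab : a ≠ b)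
    (hsq : ∀ R ∈ s, R ∈ qs) (ha : ∀ R ∈ s, occ qs a (R a) = 1)
    (hb : ∀ R ∈ s, occ qs b (R b) = 1) (h2 : 2 ≤ #s) :
    ∃ Q ∈ s, ∃ R ∈ s, Q ≠ R ∧ Q a = R b := by
  obtain ⟨Q, hQ, R, hR, hQR⟩ := one_lt_card.1 h2
  rcases hqs.apply_eq_or_apply_eq hc hab (hsq Q hQ) (hsq R hR) hQR (ha Q hQ) (hb Q hQ)
    (ha R hR) (hb R hR) with h | h
  · exact ⟨Q, hQ, R, hR, hQR, h⟩
  · exact ⟨R, hR, Q, hQ, hQR.symm, h⟩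

end Links

-- The (≥2,1,1)-, (1,≥2,1)- and (1,1,≥2)-questions, according to the peg `i` carrying the `≥2`.
def heavyAt {p : ℕ} (qs : List (Fin p → Fin c)) (i : Fin p) : Finset (Fin p → Fin c) :=
  qs.toFinset.filter fun Q => 2 ≤ occ qs i (Q i) ∧ ∀ t ≠ i, occ qs t (Q t) = 1

section HeavyAt

variable {p : ℕ} {qs : List (Fin p → Fin c)} {i j t : Fin p} {Q R : Fin p → Fin c}

lemma mem_heavyAt :
    Q ∈ heavyAt qs i ↔ Q ∈ qs ∧ 2 ≤ occ qs i (Q i) ∧ ∀ t ≠ i, occ qs t (Q t) = 1 := by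
  simp [heavyAt]

lemma mem_of_mem_heavyAt (hQ : Q ∈ heavyAt qs i) : Q ∈ qs := (mem_heavyAt.1 hQ).1

lemma occ_eq_one_of_mem_heavyAt (hQ : Q ∈ heavyAt qs i) (ht : t ≠ i) : occ qs t (Q t) = 1 :=
  (mem_heavyAt.1 hQ).2.2 t ht

lemma ne_of_mem_heavyAt (hij : i ≠ j) (hQ : Q ∈ heavyAt qs i) (hR : R ∈ heavyAt qs j) :
    Q ≠ R := by
  rintro rfl
  have := (mem_heavyAt.1 hQ).2.1
  rw [occ_eq_one_of_mem_heavyAt hR hij] at this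
  omega

end HeavyAt

section HeavyAt3

variable {i j k : Fin 3}

theorem Feasible.card_heavyAt_le_three (hqs : Feasible qs) (hc : 5 ≤ c)
    (hij : i ≠ j) (hik : i ≠ k) (hjk : j ≠ k) : #(heavyAt qs i) ≤ 3 :=
  hqs.card_le_three hc hjk (fun _ => mem_of_mem_heavyAt)
    (fun _ hR => occ_eq_one_of_mem_heavyAt hR hij.symm)
    (fun _ hR => occ_eq_one_of_mem_heavyAt hR hik.symm)

lemma card_filter_heavyAt_apply_eq_le_one (hij : i ≠ j) (x : Fin c) :
    #((heavyAt qs i).filter fun R => R j = x) ≤ 1 :=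
  card_filter_apply_eq_le_one (fun _ => mem_of_mem_heavyAt)
    (fun _ hR => occ_eq_one_of_mem_heavyAt hR hij.symm) x

theorem Feasible.mem_heavyAt_of_apply_eq (hqs : Feasible qs) (hc : 5 ≤ c)
    (hij : i ≠ j) (hik : i ≠ k) (hjk : j ≠ k) (h3 : #(heavyAt qs i) = 3)
    {P Q : Fin 3 → Fin c} (hQ : Q ∈ heavyAt qs i) (hP : P ∈ qs) (h : P k = Q j) :
    P ∈ heavyAt qs i :=
  hqs.mem_of_apply_eq hc hjk (fun _ => mem_of_mem_heavyAt)
    (fun _ hR => occ_eq_one_of_mem_heavyAt hR hij.symm)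
    (fun _ hR => occ_eq_one_of_mem_heavyAt hR hik.symm) h3 hQ hP h

theorem Feasible.triple_apply_eq_of_card_heavyAt_eq_three (hqs : Feasible qs) (hc : 5 ≤ c)
    (hij : i ≠ j) (hik : i ≠ k) (hjk : j ≠ k) (h3 : #(heavyAt qs i) = 3)
    {U V W : Fin 3 → Fin c} (hU : U ∈ heavyAt qs i) (hV : V ∈ heavyAt qs j)
    (hW : W ∈ heavyAt qs k) :
    W i = U j ∨ W i = V k ∨ V i = W j ∨ V i = U k := by
  rcases hqs.triple_apply_eq hij hik hjk (mem_of_mem_heavyAt hU) (mem_of_mem_heavyAt hV)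
      (mem_of_mem_heavyAt hW) (ne_of_mem_heavyAt hjk hV hW)
      (occ_eq_one_of_mem_heavyAt hU hij.symm) (occ_eq_one_of_mem_heavyAt hU hik.symm)
      (occ_eq_one_of_mem_heavyAt hV hij) (occ_eq_one_of_mem_heavyAt hV hjk.symm)
      (occ_eq_one_of_mem_heavyAt hW hik) (occ_eq_one_of_mem_heavyAt hW hjk) with
    h | h | h | h | h | h
  · exact .inl h
  · exact .inr (.inl h)
  · exact (ne_of_mem_heavyAt hij (hqs.mem_heavyAt_of_apply_eq hc hij hik hjk h3 hU
      (mem_of_mem_heavyAt hV) h.symm) hV rfl).elim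
  · exact .inr (.inr (.inl h))
  · exact .inr (.inr (.inr h))
  · exact (ne_of_mem_heavyAt hik (hqs.mem_heavyAt_of_apply_eq hc hik hij hjk.symm h3 hU
      (mem_of_mem_heavyAt hW) h) hW rfl).elim

theorem Feasible.heavyAt_eq_empty (hqs : Feasible qs) (hc : 5 ≤ c)
    (hij : i ≠ j) (hik : i ≠ k) (hjk : j ≠ k)
    (hA : #(heavyAt qs i) = 3) (hB : #(heavyAt qs j) = 3) : heavyAt qs k = ∅ := by
  by_contra! hC
  obtain ⟨W, hW⟩ := hC
  obtain ⟨U, hU, hUW⟩ : ∃ U ∈ heavyAt qs i, U ∉ (heavyAt qs i).filter fun U => U j = W i :=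
    exists_mem_notMem_of_card_lt_card <| by
      have := card_filter_heavyAt_apply_eq_le_one (qs := qs) hij (W i)
      omega
  rw [mem_filter, not_and] at hUW
  have key : ∀ V ∈ heavyAt qs j, V i = W j := fun V hV => by
    rcases hqs.triple_apply_eq_of_card_heavyAt_eq_three hc hij hik hjk hA hU hV hW with
      h | h | h | h
    · exact absurd h.symm (hUW hU)
    · exact (ne_of_mem_heavyAt hjk (hqs.mem_heavyAt_of_apply_eq hc hjk hij.symm hik.symm
        hB hV (mem_of_mem_heavyAt hW) h) hW rfl).elim
    · exact h
    · exact (ne_of_mem_heavyAt hij.symm (hqs.mem_heavyAt_of_apply_eq hc hij.symm hjk hik hB hV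
        (mem_of_mem_heavyAt hU) h.symm) hU rfl).elim
  obtain ⟨V, hV, V', hV', hVV'⟩ := one_lt_card.1 (by omega : 1 < #(heavyAt qs j))
  exact hVV' (eq_of_occ_eq_one (mem_of_mem_heavyAt hV) (mem_of_mem_heavyAt hV')
    (occ_eq_one_of_mem_heavyAt hV' hij) ((key V hV).trans (key V' hV').symm))

theorem Feasible.card_heavyAt_le_one (hqs : Feasible qs) (hc : 5 ≤ c)
    (hij : i ≠ j) (hik : i ≠ k) (hjk : j ≠ k)
    (hA : #(heavyAt qs i) = 3) (hB : 2 ≤ #(heavyAt qs j)) : #(heavyAt qs k) ≤ 1 := by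
  by_contra! hC
  obtain ⟨V₁, hV₁, V₂, hV₂, -, hV⟩ := hqs.exists_apply_eq_of_two_le_card hc hik
    (fun _ => mem_of_mem_heavyAt) (fun _ hR => occ_eq_one_of_mem_heavyAt hR hij)
    (fun _ hR => occ_eq_one_of_mem_heavyAt hR hjk.symm) hB
  obtain ⟨W₁, hW₁, W₂, hW₂, hW₁₂, hW⟩ := hqs.exists_apply_eq_of_two_le_card hc hij
    (fun _ => mem_of_mem_heavyAt) (fun _ hR => occ_eq_one_of_mem_heavyAt hR hik)
    (fun _ hR => occ_eq_one_of_mem_heavyAt hR hjk) hC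
  obtain ⟨U, hU, hUWV⟩ : ∃ U ∈ heavyAt qs i, U ∉ (heavyAt qs i).filter (fun U => U j = W₂ i) ∪
      (heavyAt qs i).filter (fun U => U k = V₂ i) :=
    exists_mem_notMem_of_card_lt_card <| by
      have := card_union_le ((heavyAt qs i).filter (fun U => U j = W₂ i))
        ((heavyAt qs i).filter (fun U => U k = V₂ i))
      have := card_filter_heavyAt_apply_eq_le_one (qs := qs) hij (W₂ i)
      have := card_filter_heavyAt_apply_eq_le_one (qs := qs) hik (V₂ i)
      omega
  simp only [mem_union, mem_filter, hU, true_and, not_or] at hUWV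
  obtain ⟨hUW, hUV⟩ := hUWV
  have key : ∀ W ∈ heavyAt qs k, W i ≠ U j → V₂ i = W j := fun W hW hWU => by
    rcases hqs.triple_apply_eq_of_card_heavyAt_eq_three hc hij hik hjk hA hU hV₂ hW with
      h | h | h | h
    · exact absurd h hWU
    · exact (ne_of_mem_heavyAt hjk hV₁ hW (eq_of_occ_eq_one (mem_of_mem_heavyAt hW)
        (mem_of_mem_heavyAt hV₁) (occ_eq_one_of_mem_heavyAt hV₁ hij) (h.trans hV.symm)).symm).elim
    · exact h
    · exact absurd h.symm hUV
  have hW₁U : W₁ i ≠ U j := fun h => ne_of_mem_heavyAt hik hU hW₂ <|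
    eq_of_occ_eq_one (mem_of_mem_heavyAt hU) (mem_of_mem_heavyAt hW₂)
      (occ_eq_one_of_mem_heavyAt hW₂ hjk) (h.symm.trans hW)
  exact hW₁₂ (eq_of_occ_eq_one (mem_of_mem_heavyAt hW₁) (mem_of_mem_heavyAt hW₂)
    (occ_eq_one_of_mem_heavyAt hW₂ hjk)
    ((key W₁ hW₁ hW₁U).symm.trans (key W₂ hW₂ (Ne.symm hUW))))

end HeavyAt3

theorem statement18_general (c : ℕ) (hc : 5 ≤ c) (qs : List (Fin 3 → Fin c))
    (hqs : Feasible qs) :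
    qs.countP (fun Q => decide
      ((2 ≤ occ qs 0 (Q 0) ∧ occ qs 1 (Q 1) = 1 ∧ occ qs 2 (Q 2) = 1) ∨
       (occ qs 0 (Q 0) = 1 ∧ 2 ≤ occ qs 1 (Q 1) ∧ occ qs 2 (Q 2) = 1) ∨
       (occ qs 0 (Q 0) = 1 ∧ occ qs 1 (Q 1) = 1 ∧ 2 ≤ occ qs 2 (Q 2)))) ≤ 6 := by
  rw [← hqs.1.card_eq_countP]
  refine (card_le_card (fun Q hQ => ?_ : _ ⊆ heavyAt qs 0 ∪ heavyAt qs 1 ∪ heavyAt qs 2)).trans ?_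
  · simp only [mem_filter, List.mem_toFinset, mem_union, mem_heavyAt, Fin.forall_fin_succ,
      Fin.succ_zero_eq_one, Fin.succ_one_eq_two, ne_eq, Fin.reduceEq, not_true_eq_false,
      not_false_eq_true, forall_const, IsEmpty.forall_iff] at hQ ⊢
    tauto
  have cases : ∀ i j k : Fin 3, i ≠ j → i ≠ k → j ≠ k →
      #(heavyAt qs i) ≤ 3 ∧ (#(heavyAt qs i) = 3 → #(heavyAt qs j) = 3 → #(heavyAt qs k) = 0) ∧
        (#(heavyAt qs i) = 3 → 2 ≤ #(heavyAt qs j) → #(heavyAt qs k) ≤ 1) :=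
    fun i j k hij hik hjk => ⟨hqs.card_heavyAt_le_three hc hij hik hjk,
      fun hA hB => card_eq_zero.2 (hqs.heavyAt_eq_empty hc hij hik hjk hA hB),
      hqs.card_heavyAt_le_one hc hij hik hjk⟩
  have := cases 0 1 2 (by decide) (by decide) (by decide)
  have := cases 1 2 0 (by decide) (by decide) (by decide)
  have := cases 2 0 1 (by decide) (by decide) (by decide)
  have := card_union_le (heavyAt qs 0 ∪ heavyAt qs 1) (heavyAt qs 2)
  have := card_union_le (heavyAt qs 0) (heavyAt qs 1)
  omega

theorem statement18 (c : ℕ) (hc : 5 ≤ c) (qs : List (Fin 3 → Fin c))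
    (hqs : Feasible qs)
    (hno : ∀ Q ∈ qs, ¬ ∀ i : Fin 3, occ qs i (Q i) = 1) :
    qs.countP (fun Q => decide
      ((2 ≤ occ qs 0 (Q 0) ∧ occ qs 1 (Q 1) = 1 ∧ occ qs 2 (Q 2) = 1) ∨
       (occ qs 0 (Q 0) = 1 ∧ 2 ≤ occ qs 1 (Q 1) ∧ occ qs 2 (Q 2) = 1) ∨
       (occ qs 0 (Q 0) = 1 ∧ occ qs 1 (Q 1) = 1 ∧ 2 ≤ occ qs 2 (Q 2)))) ≤ 6 :=
  statement18_general c hc qs hqs
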